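/- arXiv:1405.2746 — 2 statements merged into one kernel-verified Lean document; each statement's English description precedes it below -/
import Mathlib

section
/- Let k be a field of characteristic zero, let n ≥ 1, let h ∈ k[x_0,…,x_n] be a homogeneous polynomial of degree d ∈ ℕ, and let f_0,…,f_n ∈ k(x_0,…,x_n) be homogeneous rational functions of degree e ∈ ℤ with e ≠ 0. Then Jac(hf_0,…,hf_n) = (1 + d/e)·Jac(f_0,…,f_n)·h^{n+1}. -/
open MvPolynomial

noncomputable section

/-- `F = k(x_0,…,x_n)`, the fraction field of `k[x_0,…,x_n]` (in `n+1` variables). -/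
abbrev Fn (k : Type) [Field k] (n : ℕ) : Type :=
  FractionRing (MvPolynomial (Fin (n + 1)) k)

/-- The family `D` of derivations on `k(x_0,…,x_n)` consists of the canonical extensions
of the partial derivatives `∂/∂x_j` on `k[x_0,…,x_n]`. -/
def ExtendsPderiv (k : Type) [Field k] (n : ℕ)
    (D : Fin (n + 1) → Derivation k (Fn k n) (Fn k n)) : Prop :=
  ∀ (j : Fin (n + 1)) (p : MvPolynomial (Fin (n + 1)) k),
    D j (algebraMap (MvPolynomial (Fin (n + 1)) k) (Fn k n) p) =
      algebraMap (MvPolynomial (Fin (n + 1)) k) (Fn k n) (pderiv j p)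

/-- `Jac(f_0,…,f_n) = det (∂f_i/∂x_j)`. -/
def Jac (k : Type) [Field k] (n : ℕ)
    (D : Fin (n + 1) → Derivation k (Fn k n) (Fn k n))
    (f : Fin (n + 1) → Fn k n) : Fn k n :=
  Matrix.det (Matrix.of fun i j => D j (f i))

/-- `f ∈ k(x_0,…,x_n)` is homogeneous of degree `e ∈ ℤ`: it can be written as a quotient
`g/h` of nonzero homogeneous polynomials with `deg g − deg h = e`. -/
def IsHomogeneousRat (k : Type) [Field k] (n : ℕ) (f : Fn k n) (e : ℤ) : Prop :=
  ∃ (g h : MvPolynomial (Fin (n + 1)) k) (dg dh : ℕ),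
    g ≠ 0 ∧ h ≠ 0 ∧ g.IsHomogeneous dg ∧ h.IsHomogeneous dh ∧
    f = algebraMap (MvPolynomial (Fin (n + 1)) k) (Fn k n) g /
        algebraMap (MvPolynomial (Fin (n + 1)) k) (Fn k n) h ∧
    (dg : ℤ) - (dh : ℤ) = e

/-! The Euler vector field `E = ∑ x_j ∂_j` multiplies a homogeneous rational function of degree
`e` by `e` (for polynomials this is Euler's identity, and eigenvectors of a derivation are closed
under quotients), and multiplies `h` by `d`. So the column `f` equals `e⁻¹ J u`, where `J` is the
Jacobian matrix of `f` and `u = (x_j)`. The Leibniz rule then factors the Jacobian matrix of `h f`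
as `h J + f (∇h)ᵀ = J (h I + e⁻¹ u (∇h)ᵀ)`, and the matrix determinant lemma evaluates the second
factor to `h^{n+1} (1 + (e h)⁻¹ ∇h ⬝ u) = h^{n+1} (1 + d/e)`. -/

theorem Derivation.apply_div_of_apply_eq_mul {R K : Type*} [CommRing R] [Field K] [Algebra R K]
    (δ : Derivation R K K) {g h a b : K} (hg : δ g = a * g) (hh : δ h = b * h) :
    δ (g / h) = (a - b) * (g / h) := by
  rcases eq_or_ne h 0 with rfl | hh0
  · simp
  rw [Derivation.leibniz_div, hg, hh, smul_eq_mul, smul_eq_mul, smul_eq_mul]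
  field_simp

theorem Derivation.sum_apply {R A M ι : Type*} [CommSemiring R] [CommSemiring A] [AddCommMonoid M]
    [Algebra R A] [Module A M] [Module R M] (s : Finset ι) (D : ι → Derivation R A M) (a : A) :
    (∑ j ∈ s, D j) a = ∑ j ∈ s, D j a := by
  show Derivation.coeFnAddMonoidHom (∑ j ∈ s, D j) a = _
  rw [map_sum, Finset.sum_apply]
  rfl

namespace Matrix

variable {ι K : Type*} [Fintype ι] [DecidableEq ι] [Field K]

theorem det_smul_one_add_replicateCol_mul_replicateRow {c : K} (hc : c ≠ 0) (u v : ι → K) :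
    (c • 1 + replicateCol (Fin 1) u * replicateRow (Fin 1) v).det =
      c ^ Fintype.card ι * (1 + c⁻¹ * v ⬝ᵥ u) := by
  have : c • 1 + replicateCol (Fin 1) u * replicateRow (Fin 1) v =
      c • (1 + replicateCol (Fin 1) u * replicateRow (Fin 1) (c⁻¹ • v)) := by
    rw [smul_add, replicateRow_smul, Matrix.mul_smul, smul_smul, mul_inv_cancel₀ hc, one_smul]
  rw [this, det_smul, ← smul_eq_mul c⁻¹ (v ⬝ᵥ u), ← smul_dotProduct]
  exact congrArg _ (det_one_add_replicateCol_mul_replicateRow _ _)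

end Matrix

open Matrix

section Jacobian

variable {R K ι : Type*} [CommRing R] [CommRing K] [Algebra R K]

def jacobian (D : ι → Derivation R K K) (f : ι → K) : Matrix ι ι K :=
  Matrix.of fun i j => D j (f i)

theorem jacobian_const_mul (D : ι → Derivation R K K) (c : K) (f : ι → K) :
    jacobian D (fun i => c * f i) =
      c • jacobian D f + replicateCol (Fin 1) f * replicateRow (Fin 1) (fun j => D j c) := by
  ext i j
  simp [jacobian, Derivation.leibniz, replicateCol, replicateRow, Matrix.mul_apply]

theorem jacobian_mulVec [Fintype ι] (D : ι → Derivation R K K) (f u : ι → K) :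
    jacobian D f *ᵥ u = fun i => (∑ j, u j • D j) (f i) := by
  ext i
  simp [jacobian, mulVec, dotProduct, Derivation.sum_apply, mul_comm]

end Jacobian

theorem det_jacobian_const_mul {R K ι : Type*} [CommRing R] [Field K] [Algebra R K] [Fintype ι]
    [DecidableEq ι] [Nonempty ι] (D : ι → Derivation R K K) {f u : ι → K} {c d e : K}
    (hf : ∀ i, (∑ j, u j • D j) (f i) = e * f i) (he : e ≠ 0)
    (hc : (∑ j, u j • D j) c = d * c) :
    (jacobian D fun i => c * f i).det = (1 + d / e) * (jacobian D f).det * c ^ Fintype.card ι := by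
  rcases eq_or_ne c 0 with rfl | hc0
  · have : jacobian D (fun _ => (0 : K)) = 0 := by ext; simp [jacobian]
    simp [this]
  have hcol : replicateCol (Fin 1) f = e⁻¹ • (jacobian D f * replicateCol (Fin 1) u) := by
    rw [← replicateCol_mulVec, jacobian_mulVec, funext hf]
    ext
    simp [he]
  have hfactor : jacobian D (fun i => c * f i) = jacobian D f *
      (c • 1 + replicateCol (Fin 1) u * replicateRow (Fin 1) (e⁻¹ • fun j => D j c)) := by
    rw [jacobian_const_mul, hcol, Matrix.smul_mul, Matrix.mul_assoc, Matrix.mul_add,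
      Matrix.mul_smul, Matrix.mul_one, replicateRow_smul, Matrix.mul_smul, Matrix.mul_smul]
  have hc_dot : (fun j => D j c) ⬝ᵥ u = d * c := by
    simpa [dotProduct, Derivation.sum_apply, mul_comm] using hc
  rw [hfactor, det_mul, det_smul_one_add_replicateCol_mul_replicateRow hc0, smul_dotProduct, hc_dot,
    smul_eq_mul]
  field_simp

section Euler

variable {k : Type} [Field k] {n : ℕ} {D : Fin (n + 1) → Derivation k (Fn k n) (Fn k n)}

def eulerDerivation (D : Fin (n + 1) → Derivation k (Fn k n) (Fn k n)) :
    Derivation k (Fn k n) (Fn k n) :=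
  ∑ j, algebraMap (MvPolynomial (Fin (n + 1)) k) (Fn k n) (X j) • D j

theorem eulerDerivation_algebraMap_of_isHomogeneous (hD : ExtendsPderiv k n D)
    {p : MvPolynomial (Fin (n + 1)) k} {d : ℕ} (hp : p.IsHomogeneous d) :
    eulerDerivation D (algebraMap _ (Fn k n) p) = d * algebraMap _ (Fn k n) p := by
  simp_rw [eulerDerivation, Derivation.sum_apply, Derivation.smul_apply, hD _ p, smul_eq_mul,
    ← map_mul, ← map_sum, hp.sum_X_mul_pderiv, nsmul_eq_mul, map_mul, map_natCast]

theorem eulerDerivation_apply_of_isHomogeneousRat (hD : ExtendsPderiv k n D) {f : Fn k n} {e : ℤ}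
    (hf : IsHomogeneousRat k n f e) : eulerDerivation D f = e * f := by
  obtain ⟨g, p, dg, dp, -, -, hg, hp, rfl, rfl⟩ := hf
  rw [Derivation.apply_div_of_apply_eq_mul _ (eulerDerivation_algebraMap_of_isHomogeneous hD hg)
    (eulerDerivation_algebraMap_of_isHomogeneous hD hp)]
  norm_cast

end Euler

theorem jac_smul_homogeneous_general (k : Type) [Field k] [CharZero k] (n : ℕ)
    (D : Fin (n + 1) → Derivation k (Fn k n) (Fn k n)) (hD : ExtendsPderiv k n D)
    (h : MvPolynomial (Fin (n + 1)) k) (d : ℕ) (hh : h.IsHomogeneous d)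
    (f : Fin (n + 1) → Fn k n) (e : ℤ) (he : e ≠ 0)
    (hf : ∀ i, IsHomogeneousRat k n (f i) e) :
    Jac k n D (fun i => algebraMap (MvPolynomial (Fin (n + 1)) k) (Fn k n) h * f i) =
      (1 + (d : Fn k n) / (e : Fn k n)) * Jac k n D f *
        algebraMap (MvPolynomial (Fin (n + 1)) k) (Fn k n) h ^ (n + 1) := by
  have hdet := det_jacobian_const_mul D
    (fun i => eulerDerivation_apply_of_isHomogeneousRat hD (hf i))
    (Int.cast_ne_zero.mpr he) (eulerDerivation_algebraMap_of_isHomogeneous hD hh)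
  rwa [Fintype.card_fin] at hdet

/-- If `char k = 0`, `h` is homogeneous of degree `d` and `f_0,…,f_n` are homogeneous
rational functions of degree `e ≠ 0`, then
`Jac(hf_0,…,hf_n) = (1 + d/e)·Jac(f_0,…,f_n)·h^{n+1}`. -/
theorem jac_smul_homogeneous (k : Type) [Field k] [CharZero k] (n : ℕ) (hn : 1 ≤ n)
    (D : Fin (n + 1) → Derivation k (Fn k n) (Fn k n)) (hD : ExtendsPderiv k n D)
    (h : MvPolynomial (Fin (n + 1)) k) (d : ℕ) (hh : h.IsHomogeneous d)
    (f : Fin (n + 1) → Fn k n) (e : ℤ) (he : e ≠ 0)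
    (hf : ∀ i, IsHomogeneousRat k n (f i) e) :
    Jac k n D (fun i => algebraMap (MvPolynomial (Fin (n + 1)) k) (Fn k n) h * f i) =
      (1 + (d : Fn k n) / (e : Fn k n)) * Jac k n D f *
        algebraMap (MvPolynomial (Fin (n + 1)) k) (Fn k n) h ^ (n + 1) :=
  jac_smul_homogeneous_general k n D hD h d hh f e he hf
end
end

section
/- Let n ≥ 3. Then the group GL(n,ℤ)_odd is generated by the n×n permutation matrices together with the three matrices M_θ = diag(−1,1,…,1), M_μ = I_n + 2E_{21}, and M_ν = I_n + E_{21} + E_{31}, where E_{ij} denotes the matrix with a single nonzero entry 1 in position (i,j). -/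
/-!
Write `E` (`oddElementary`) for the subgroup generated by the permutation matrices, the sign
changes `diag(1,…,-1,…,1)`, the transvections `1 + 2 E_ab` and the products `(1 + E_as)(1 + E_bs)`.
Conjugating by permutation matrices moves `M_θ`, `M_μ`, `M_ν` to all of these, so `E` is the group
generated in the statement. The matrices with odd column sums are exactly those preserving the
parity of the coordinate sum `∑ i, v i`, a property every generator of `E` has.

Conversely, reduce `g ∈ GL(n,ℤ)_odd` column by column. Suppose its first `k` columns are
`e_0, …, e_{k-1}` and let `v` be column `k`; the elements of `E` fixing `e_0, …, e_{k-1}` (sign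
changes and permutations of the rows `≥ k`, and transvections adding multiples of such rows) bring
`v` to `e_k`. Since `g⁻¹` also fixes `e_0, …, e_{k-1}`, the entries `v_m` with `m ≥ k` generate the
unit ideal, so one of them is odd. As `∑ v` is odd, the products `(1 + E_ab)(1 + E_cb)` with
`v_a, v_b, v_c` odd and `b ≥ k` leave a single odd entry `v_p`, where `p ≥ k`. A Euclidean
algorithm using only the transvections `1 ± 2 E_ab` then clears all other entries: it never stalls,
since the odd pivot and the even entries never have the same absolute value. Finally `v_p = ±1`,
and a sign change and a permutation give `e_k`. Induction on `k` puts `g` in `E`.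
-/

open Matrix

namespace Subgroup

variable {G α : Type*} [Group G] [MulAction G α]

theorem exists_smul_of_descent (K : Subgroup G) {S : Set α} {P : α → Prop} (μ : α → ℕ)
    (step : ∀ x ∈ S, ¬ P x → ∃ h ∈ K, h • x ∈ S ∧ μ (h • x) < μ x) {x : α} (hx : x ∈ S) :
    ∃ h ∈ K, h • x ∈ S ∧ P (h • x) := by
  induction hμ : μ x using Nat.strong_induction_on generalizing x with
  | _ m ih =>
  by_cases hP : P x
  · exact ⟨1, K.one_mem, by rwa [one_smul], by rwa [one_smul]⟩
  obtain ⟨h, hK, hS, hlt⟩ := step x hx hP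
  obtain ⟨h', hK', hS', hP'⟩ := ih _ (hμ ▸ hlt) hS rfl
  exact ⟨h' * h, K.mul_mem hK' hK, by rwa [mul_smul], by rwa [mul_smul]⟩

theorem le_of_forall_exists_smul_eq {H K : Subgroup G} {x : α} (hKH : K ≤ H)
    (hstab : H ⊓ MulAction.stabilizer G x ≤ K) (horbit : ∀ g ∈ H, ∃ k ∈ K, k • g • x = x) :
    H ≤ K := by
  intro g hg
  obtain ⟨k, hk, hkg⟩ := horbit g hg
  have hkg : k * g ∈ K :=
    hstab ⟨H.mul_mem (hKH hk) hg, MulAction.mem_stabilizer_iff.2 (by rwa [mul_smul])⟩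
  simpa using K.mul_mem (K.inv_mem hk) hkg

end Subgroup

namespace Int

lemma exists_natAbs_add_mul_lt {a s : ℤ} (hs : s ≠ 0) (h : s.natAbs < a.natAbs) :
    ∃ c : ℤ, (c = 2 ∨ c = -2) ∧ (a + c * s).natAbs < a.natAbs := by
  rcases lt_or_gt_of_ne hs with hs | hs <;> rcases le_or_gt 0 a with ha | ha
  exacts [⟨2, .inl rfl, by omega⟩, ⟨-2, .inr rfl, by omega⟩, ⟨-2, .inr rfl, by omega⟩,
    ⟨2, .inl rfl, by omega⟩]

lemma exists_odd_ne_ne {ι : Type*} [Fintype ι] [DecidableEq ι] {x : ι → ℤ}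
    (hx : Odd (∑ i, x i)) {a b : ι} (hab : a ≠ b) (ha : Odd (x a)) (hb : Odd (x b)) :
    ∃ c, c ≠ a ∧ c ≠ b ∧ Odd (x c) := by
  by_contra! h
  have hrest : Even (∑ i ∈ (Finset.univ.erase a).erase b, x i) :=
    Finset.even_sum _ fun i hi => by
      simp only [Finset.mem_erase, Finset.mem_univ, and_true] at hi
      exact Int.not_odd_iff_even.1 (h i hi.2 hi.1)
  rw [← Finset.add_sum_erase _ _ (Finset.mem_univ a),
    ← Finset.add_sum_erase _ _ (Finset.mem_erase.2 ⟨hab.symm, Finset.mem_univ b⟩),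
    ← add_assoc] at hx
  exact Int.not_even_iff_odd.2 hx ((ha.add_odd hb).add hrest)

end Int

namespace Matrix

section

variable {ι R : Type*} [Fintype ι] [DecidableEq ι] [CommRing R]

lemma GeneralLinearGroup.ext_smul_single {g h : GL ι R}
    (hgh : ∀ j, g • (Pi.single j 1 : ι → R) = h • Pi.single j 1) : g = h :=
  Units.ext <| ext_of_mulVec_single hgh

lemma GeneralLinearGroup.smul_single_one_apply (g : GL ι R) (i j : ι) :
    (g • Pi.single j 1 : ι → R) i = (g : Matrix ι ι R) i j := by
  simp [Units.smul_def]

lemma diagonal_mulSingle_neg_one_mul_self (p : ι) :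
    diagonal (Pi.mulSingle p (-1 : R)) * diagonal (Pi.mulSingle p (-1)) = 1 := by
  rw [diagonal_mul_diagonal, ← diagonal_one]
  congr 1
  ext i
  rcases eq_or_ne i p with rfl | hip <;> simp [*]

end

variable {n : ℕ}

def permGL : Equiv.Perm (Fin n) →* GL (Fin n) ℤ := permMatrixHom.toHomUnits

lemma permGL_smul (σ : Equiv.Perm (Fin n)) (v : Fin n → ℤ) : permGL σ • v = v ∘ σ.symm :=
  permMatrix_mulVec σ⁻¹

lemma coe_permGL (σ : Equiv.Perm (Fin n)) :
    (permGL σ : Matrix (Fin n) (Fin n) ℤ) = of fun i j => if i = σ j then 1 else 0 := by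
  ext i j
  simp [permGL, PEquiv.toMatrix_apply, Equiv.eq_symm_apply, eq_comm]

def transvectionGL {a b : Fin n} (hab : a ≠ b) (c : ℤ) : GL (Fin n) ℤ :=
  SpecialLinearGroup.toGL (SpecialLinearGroup.transvection hab c)

lemma coe_transvectionGL {a b : Fin n} (hab : a ≠ b) (c : ℤ) :
    (transvectionGL hab c : Matrix (Fin n) (Fin n) ℤ) = 1 + single a b c := rfl

lemma coe_transvectionGL_mul_transvectionGL {a b s : Fin n} (has : a ≠ s) (hbs : b ≠ s)
    (c d : ℤ) :
    ((transvectionGL has c * transvectionGL hbs d : GL (Fin n) ℤ) : Matrix (Fin n) (Fin n) ℤ) =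
      1 + single a s c + single b s d := by
  rw [Units.val_mul, coe_transvectionGL, coe_transvectionGL, add_mul, one_mul, mul_add, mul_one,
    single_mul_single_of_ne _ _ _ _ hbs.symm, add_zero]
  abel

lemma transvectionGL_smul {a b : Fin n} (hab : a ≠ b) (c : ℤ) (v : Fin n → ℤ) :
    transvectionGL hab c • v = v + Pi.single a (c * v b) := by
  ext i
  simp [Units.smul_def, coe_transvectionGL, add_mulVec, single_mulVec_eq, Pi.single_apply]

lemma transvectionGL_neg {a b : Fin n} (hab : a ≠ b) (c : ℤ) :
    transvectionGL hab (-c) = (transvectionGL hab c)⁻¹ := by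
  rw [transvectionGL, ← SpecialLinearGroup.transvection_inv, map_inv]
  rfl

def reflectionGL (p : Fin n) : GL (Fin n) ℤ where
  val := diagonal (Pi.mulSingle p (-1))
  inv := diagonal (Pi.mulSingle p (-1))
  val_inv := diagonal_mulSingle_neg_one_mul_self p
  inv_val := diagonal_mulSingle_neg_one_mul_self p

lemma coe_reflectionGL (p : Fin n) :
    (reflectionGL p : Matrix (Fin n) (Fin n) ℤ) = diagonal fun i => if i = p then -1 else 1 := by
  show diagonal _ = _
  congr 1
  funext i
  exact Pi.mulSingle_apply p (-1 : ℤ) i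

lemma reflectionGL_smul (p : Fin n) (v : Fin n → ℤ) :
    reflectionGL p • v = v - Pi.single p (2 * v p) := by
  ext i
  rcases eq_or_ne i p with rfl | hip
  · simp [Units.smul_def, reflectionGL, mulVec_diagonal]
    ring
  · simp [Units.smul_def, reflectionGL, mulVec_diagonal, hip]

lemma permGL_conj_transvectionGL (σ : Equiv.Perm (Fin n)) {a b : Fin n} (hab : a ≠ b) (c : ℤ) :
    permGL σ * transvectionGL hab c * (permGL σ)⁻¹ = transvectionGL (σ.injective.ne hab) c := by
  refine GeneralLinearGroup.ext_smul_single fun j => ?_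
  simp only [mul_smul, ← map_inv, permGL_smul, transvectionGL_smul]
  ext i
  simp [Pi.single_apply, Equiv.Perm.inv_def, Equiv.symm_apply_eq]

lemma permGL_conj_reflectionGL (σ : Equiv.Perm (Fin n)) (p : Fin n) :
    permGL σ * reflectionGL p * (permGL σ)⁻¹ = reflectionGL (σ p) := by
  refine GeneralLinearGroup.ext_smul_single fun j => ?_
  simp only [mul_smul, ← map_inv, permGL_smul, reflectionGL_smul]
  ext i
  simp [Pi.single_apply, Equiv.Perm.inv_def, Equiv.symm_apply_eq]

/-- `GL(n,ℤ)_odd`, defined as the stabilizer of the parity of the coordinate sum; see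
`mem_GLOdd_iff` for the description by column sums. -/
def GLOdd (n : ℕ) : Subgroup (GL (Fin n) ℤ) where
  carrier := {g | ∀ v : Fin n → ℤ, ∑ i, (g • v) i ≡ ∑ i, v i [ZMOD 2]}
  mul_mem' hg hh v := by
    rw [mul_smul]
    exact (hg _).trans (hh v)
  one_mem' v := by rw [one_smul]
  inv_mem' {g} hg v := by simpa using (hg (g⁻¹ • v)).symm

lemma mem_GLOdd_iff {g : GL (Fin n) ℤ} :
    g ∈ GLOdd n ↔ ∀ j, Odd (∑ i, (g : Matrix (Fin n) (Fin n) ℤ) i j) := by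
  have hsum (v : Fin n → ℤ) :
      ∑ i, (g • v) i = ∑ j, (∑ i, (g : Matrix (Fin n) (Fin n) ℤ) i j) * v j := by
    simp only [Units.smul_def, smul_eq_mulVec, mulVec, dotProduct, Finset.sum_mul]
    exact Finset.sum_comm
  constructor
  · intro hg j
    simpa [GeneralLinearGroup.smul_single_one_apply, Int.odd_iff, Int.ModEq] using
      hg (Pi.single j 1)
  · intro hg v
    rw [hsum]
    refine Int.ModEq.sum fun j _ => ?_
    have hj : ∑ i, (g : Matrix (Fin n) (Fin n) ℤ) i j ≡ 1 [ZMOD 2] := Int.odd_iff.1 (hg j)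
    simpa using hj.mul_right (v j)

def fixingCols (n k : ℕ) : Subgroup (GL (Fin n) ℤ) :=
  fixingSubgroup _ ((fun j : Fin n => (Pi.single j 1 : Fin n → ℤ)) '' {j | (j : ℕ) < k})

lemma mem_fixingCols {k : ℕ} {g : GL (Fin n) ℤ} :
    g ∈ fixingCols n k ↔
      ∀ j : Fin n, (j : ℕ) < k → g • (Pi.single j 1 : Fin n → ℤ) = Pi.single j 1 := by
  simp [fixingCols, mem_fixingSubgroup_iff]

lemma fixingCols_zero : fixingCols n 0 = ⊤ :=
  eq_top_iff.2 fun _ _ => mem_fixingCols.2 fun _ hj => absurd hj (Nat.not_lt_zero _)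

lemma fixingCols_self : fixingCols n n = ⊥ :=
  eq_bot_iff.2 fun g hg => Subgroup.mem_bot.2 <| GeneralLinearGroup.ext_smul_single fun j => by
    rw [one_smul, mem_fixingCols.1 hg j j.2]

lemma fixingCols_inf_stabilizer_le (κ : Fin n) :
    fixingCols n κ ⊓ MulAction.stabilizer _ (Pi.single κ 1 : Fin n → ℤ) ≤
      fixingCols n (κ + 1) := by
  rintro g ⟨hg, hκ⟩
  refine mem_fixingCols.2 fun j hj => ?_
  rcases Nat.lt_succ_iff_lt_or_eq.1 hj with hj | hj
  · exact mem_fixingCols.1 hg j hj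
  · rwa [Fin.ext hj]

lemma transvectionGL_mem_fixingCols {k : ℕ} {a b : Fin n} (hab : a ≠ b) (c : ℤ) (hb : k ≤ b) :
    transvectionGL hab c ∈ fixingCols n k :=
  mem_fixingCols.2 fun j hj => by
    rw [transvectionGL_smul, Pi.single_eq_of_ne (fun h => by omega), mul_zero, Pi.single_zero,
      add_zero]

lemma reflectionGL_mem_fixingCols {k : ℕ} {p : Fin n} (hp : k ≤ p) :
    reflectionGL p ∈ fixingCols n k :=
  mem_fixingCols.2 fun j hj => by
    rw [reflectionGL_smul, Pi.single_eq_of_ne (fun h => by omega), mul_zero, Pi.single_zero,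
      sub_zero]

lemma permGL_mem_fixingCols {k : ℕ} {σ : Equiv.Perm (Fin n)}
    (hσ : ∀ j : Fin n, (j : ℕ) < k → σ j = j) : permGL σ ∈ fixingCols n k :=
  mem_fixingCols.2 fun j hj => by
    rw [permGL_smul, Pi.single_comp_equiv, Equiv.symm_symm, hσ j hj]

def oddElementary (n : ℕ) : Subgroup (GL (Fin n) ℤ) :=
  Subgroup.closure (Set.range permGL ∪ Set.range reflectionGL ∪
    {g | ∃ (a b : Fin n) (hab : a ≠ b), g = transvectionGL hab 2} ∪
    {g | ∃ (a b s : Fin n) (has : a ≠ s) (hbs : b ≠ s), a ≠ b ∧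
      g = transvectionGL has 1 * transvectionGL hbs 1})

lemma permGL_mem_oddElementary (σ : Equiv.Perm (Fin n)) : permGL σ ∈ oddElementary n :=
  Subgroup.subset_closure (.inl (.inl (.inl ⟨σ, rfl⟩)))

lemma reflectionGL_mem_oddElementary (p : Fin n) : reflectionGL p ∈ oddElementary n :=
  Subgroup.subset_closure (.inl (.inl (.inr ⟨p, rfl⟩)))

lemma transvectionGL_mem_oddElementary {a b : Fin n} (hab : a ≠ b) {c : ℤ}
    (hc : c = 2 ∨ c = -2) : transvectionGL hab c ∈ oddElementary n := by
  have h2 : transvectionGL hab 2 ∈ oddElementary n :=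
    Subgroup.subset_closure (.inl (.inr ⟨a, b, hab, rfl⟩))
  rcases hc with rfl | rfl
  · exact h2
  · rw [transvectionGL_neg]
    exact inv_mem h2

lemma transvectionGL_mul_transvectionGL_mem_oddElementary {a b s : Fin n} (has : a ≠ s)
    (hbs : b ≠ s) (hab : a ≠ b) :
    transvectionGL has 1 * transvectionGL hbs 1 ∈ oddElementary n :=
  Subgroup.subset_closure (.inr ⟨a, b, s, has, hbs, hab, rfl⟩)

lemma oddElementary_le_GLOdd : oddElementary n ≤ GLOdd n := by
  refine (Subgroup.closure_le _).2 ?_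
  rintro g (((⟨σ, rfl⟩ | ⟨p, rfl⟩) | ⟨a, b, hab, rfl⟩) | ⟨a, b, s, has, hbs, -, rfl⟩) v
  · simp only [permGL_smul, Function.comp_apply, Equiv.sum_comp]
    rfl
  · simp only [reflectionGL_smul, Pi.sub_apply, Finset.sum_sub_distrib, Finset.sum_pi_single',
      Finset.mem_univ, if_true, Int.ModEq]
    omega
  · simp only [transvectionGL_smul, Pi.add_apply, Finset.sum_add_distrib, Finset.sum_pi_single',
      Finset.mem_univ, if_true, Int.ModEq]
    omega
  · simp only [mul_smul, transvectionGL_smul, Pi.add_apply, Finset.sum_add_distrib,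
      Finset.sum_pi_single', Finset.mem_univ, if_true, Int.ModEq, Pi.single_eq_of_ne hbs.symm]
    omega

section ColumnReduction

open Finset

variable {κ : Fin n} {v : Fin n → ℤ}

def columnOrbit (κ : Fin n) : Set (Fin n → ℤ) :=
  MulAction.orbit ↥(GLOdd n ⊓ fixingCols n κ) (Pi.single κ 1)

lemma mem_columnOrbit :
    v ∈ columnOrbit κ ↔ ∃ g ∈ GLOdd n ⊓ fixingCols n κ, g • Pi.single κ 1 = v := by
  simp [columnOrbit, MulAction.mem_orbit_iff, Subgroup.smul_def]

lemma smul_mem_columnOrbit {h : GL (Fin n) ℤ} (hh : h ∈ oddElementary n ⊓ fixingCols n κ)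
    (hv : v ∈ columnOrbit κ) : h • v ∈ columnOrbit κ := by
  obtain ⟨g, hg, rfl⟩ := mem_columnOrbit.1 hv
  exact mem_columnOrbit.2 ⟨h * g, mul_mem ⟨oddElementary_le_GLOdd hh.1, hh.2⟩ hg, mul_smul _ _ _⟩

lemma odd_sum_of_mem_columnOrbit (hv : v ∈ columnOrbit κ) : Odd (∑ i, v i) := by
  obtain ⟨g, ⟨hg, -⟩, rfl⟩ := mem_columnOrbit.1 hv
  simpa [Int.odd_iff, Int.ModEq] using hg (Pi.single κ 1)

lemma isUnit_of_dvd_of_mem_columnOrbit (hv : v ∈ columnOrbit κ) {d : ℤ}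
    (hd : ∀ m, κ ≤ m → d ∣ v m) : IsUnit d := by
  obtain ⟨g, ⟨-, hg⟩, hgv⟩ := mem_columnOrbit.1 hv
  have h1 : ∑ m, (↑g⁻¹ : Matrix (Fin n) (Fin n) ℤ) κ m * v m = 1 := by
    change (g⁻¹ • v) κ = 1
    rw [← hgv, inv_smul_smul, Pi.single_eq_same]
  refine isUnit_of_dvd_one (h1 ▸ Finset.dvd_sum fun m _ => ?_)
  rcases le_or_gt κ m with hm | hm
  · exact dvd_mul_of_dvd_right (hd m hm) _
  · have : (↑g⁻¹ : Matrix (Fin n) (Fin n) ℤ) κ m = 0 := by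
      rw [← GeneralLinearGroup.smul_single_one_apply, mem_fixingCols.1 (inv_mem hg) m hm,
        Pi.single_eq_of_ne hm.ne']
    rw [this, zero_mul]
    exact dvd_zero d

lemma exists_le_odd_of_mem_columnOrbit (hv : v ∈ columnOrbit κ) : ∃ m, κ ≤ m ∧ Odd (v m) := by
  by_contra! h
  have := isUnit_of_dvd_of_mem_columnOrbit hv fun m hm =>
    even_iff_two_dvd.1 (Int.not_odd_iff_even.1 (h m hm))
  norm_num [Int.isUnit_iff] at this

lemma isUnit_apply_of_mem_columnOrbit (hv : v ∈ columnOrbit κ) {p : Fin n}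
    (hzero : ∀ m, κ ≤ m → m ≠ p → v m = 0) : IsUnit (v p) :=
  isUnit_of_dvd_of_mem_columnOrbit hv fun m hm => by
    rcases eq_or_ne m p with rfl | hmp
    · exact dvd_rfl
    · rw [hzero m hm hmp]
      exact dvd_zero _

lemma exists_smul_odd_iff_eq (hv : v ∈ columnOrbit κ) :
    ∃ h ∈ oddElementary n ⊓ fixingCols n κ,
      h • v ∈ columnOrbit κ ∧ ∃ p, ∀ i, Odd ((h • v) i) ↔ i = p := by
  refine Subgroup.exists_smul_of_descent (oddElementary n ⊓ fixingCols n κ)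
    (P := fun w => ∃ p, ∀ i, Odd (w i) ↔ i = p) (fun w => #{i | Odd (w i)})
    (fun w hw hP => ?_) hv
  obtain ⟨b, hbκ, hb⟩ := exists_le_odd_of_mem_columnOrbit hw
  obtain ⟨a, hab, ha⟩ : ∃ a, a ≠ b ∧ Odd (w a) := by
    by_contra! h
    exact hP ⟨b, fun i => ⟨fun hi => by_contra fun hib => h i hib hi, fun hib => hib ▸ hb⟩⟩
  obtain ⟨c, hca, hcb, hc⟩ := Int.exists_odd_ne_ne (odd_sum_of_mem_columnOrbit hw) hab ha hb
  have hh : transvectionGL hab 1 * transvectionGL hcb 1 ∈ oddElementary n ⊓ fixingCols n κ :=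
    ⟨transvectionGL_mul_transvectionGL_mem_oddElementary hab hcb hca.symm,
      mul_mem (transvectionGL_mem_fixingCols _ _ hbκ) (transvectionGL_mem_fixingCols _ _ hbκ)⟩
  refine ⟨_, hh, smul_mem_columnOrbit hh hw, ?_⟩
  have hodd (i) : Odd (((transvectionGL hab 1 * transvectionGL hcb 1) • w) i) ↔
      Odd (w i) ∧ i ≠ a ∧ i ≠ c := by
    simp only [mul_smul, transvectionGL_smul, Pi.add_apply, Pi.single_eq_of_ne hcb.symm,
      add_zero, one_mul]
    by_cases hia : i = a <;> by_cases hic : i = c <;>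
      simp [hia, hic, hca, hca.symm, Int.odd_add, ← Int.not_odd_iff_even, ha, hb, hc]
  refine Finset.card_lt_card ⟨fun i hi => ?_, fun hsub => ?_⟩
  · simp only [Finset.mem_filter, Finset.mem_univ, true_and, hodd] at hi ⊢
    exact hi.1
  · simpa [hodd] using hsub (Finset.mem_filter.2 ⟨Finset.mem_univ a, ha⟩)

lemma exists_smul_sum_natAbs_lt_of_natAbs_lt {p a s : Fin n} (hv : v ∈ columnOrbit κ)
    (hp : ∀ i, Odd (v i) ↔ i = p) (has : a ≠ s) (hsκ : κ ≤ s) (hs : v s ≠ 0)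
    (hlt : (v s).natAbs < (v a).natAbs) :
    ∃ h ∈ oddElementary n ⊓ fixingCols n κ,
      (h • v ∈ columnOrbit κ ∧ ∀ i, Odd ((h • v) i) ↔ i = p) ∧
        ∑ i, ((h • v) i).natAbs < ∑ i, (v i).natAbs := by
  obtain ⟨c, hc, hca⟩ := Int.exists_natAbs_add_mul_lt hs hlt
  have hh : transvectionGL has c ∈ oddElementary n ⊓ fixingCols n κ :=
    ⟨transvectionGL_mem_oddElementary has hc, transvectionGL_mem_fixingCols has c hsκ⟩
  refine ⟨_, hh, ⟨smul_mem_columnOrbit hh hv, fun i => ?_⟩, ?_⟩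
  · have heven : Even (c * v s) := by rcases hc with rfl | rfl <;> simp
    rw [transvectionGL_smul, Pi.add_apply, Pi.single_apply, ← hp i]
    split_ifs
    · rw [Int.odd_add, iff_true_right heven]
    · rw [add_zero]
  · refine Finset.sum_lt_sum (fun i _ => ?_)
      ⟨a, Finset.mem_univ a, by simpa [transvectionGL_smul]⟩
    rcases eq_or_ne i a with rfl | hia
    · simpa [transvectionGL_smul] using hca.le
    · simp [transvectionGL_smul, hia]

lemma exists_smul_sum_natAbs_lt {p : Fin n} (hpκ : κ ≤ p) (hv : v ∈ columnOrbit κ)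
    (hp : ∀ i, Odd (v i) ↔ i = p) (hne : ¬ ∀ i, i ≠ p → v i = 0) :
    ∃ h ∈ oddElementary n ⊓ fixingCols n κ,
      (h • v ∈ columnOrbit κ ∧ ∀ i, Odd ((h • v) i) ↔ i = p) ∧
        ∑ i, ((h • v) i).natAbs < ∑ i, (v i).natAbs := by
  push Not at hne
  obtain ⟨b, hbp, hb⟩ := hne
  obtain ⟨x, hx⟩ : Odd (v p) := (hp p).2 rfl
  have hp0 : v p ≠ 0 := by omega
  have heven (i) (hip : i ≠ p) : Even (v i) := Int.not_odd_iff_even.1 fun h => hip ((hp i).1 h)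
  by_cases hlow : ∃ b, κ ≤ b ∧ b ≠ p ∧ v b ≠ 0
  · obtain ⟨b, hbκ, hbp, hb⟩ := hlow
    obtain ⟨y, hy⟩ := heven b hbp
    rcases lt_or_gt_of_ne (show (v b).natAbs ≠ (v p).natAbs by omega) with hlt | hlt
    · exact exists_smul_sum_natAbs_lt_of_natAbs_lt hv hp hbp.symm hbκ hb hlt
    · exact exists_smul_sum_natAbs_lt_of_natAbs_lt hv hp hbp hpκ hp0 hlt
  · push Not at hlow
    have hunit := Int.isUnit_iff_natAbs_eq.1 (isUnit_apply_of_mem_columnOrbit hv hlow)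
    obtain ⟨y, hy⟩ := heven b hbp
    exact exists_smul_sum_natAbs_lt_of_natAbs_lt hv hp hbp hpκ hp0 (by omega)

lemma exists_smul_eq_single_of_eq_zero {p : Fin n} (hpκ : κ ≤ p) (hv : v ∈ columnOrbit κ)
    (hzero : ∀ i, i ≠ p → v i = 0) :
    ∃ h ∈ oddElementary n ⊓ fixingCols n κ, h • v = Pi.single κ 1 := by
  have hv_eq : v = Pi.single p (v p) := by
    ext i
    rcases eq_or_ne i p with rfl | hip
    · simp
    · simp [hzero i hip, hip]
  have hσ : permGL (Equiv.swap κ p) ∈ oddElementary n ⊓ fixingCols n κ :=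
    ⟨permGL_mem_oddElementary _, permGL_mem_fixingCols fun j hj =>
      Equiv.swap_apply_of_ne_of_ne (fun h => by simp [h] at hj)
        (fun h => absurd hpκ (not_le.2 (h ▸ hj)))⟩
  have hσp : permGL (Equiv.swap κ p) • (Pi.single p 1 : Fin n → ℤ) = Pi.single κ 1 := by
    rw [permGL_smul, Pi.single_comp_equiv, Equiv.symm_symm, Equiv.swap_apply_right]
  rcases Int.isUnit_iff.1 (isUnit_apply_of_mem_columnOrbit hv fun m _ => hzero m) with h1 | h1
  · exact ⟨_, hσ, by rw [hv_eq, h1, hσp]⟩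
  · refine ⟨_, mul_mem hσ ⟨reflectionGL_mem_oddElementary p, reflectionGL_mem_fixingCols hpκ⟩,
      ?_⟩
    have hrefl : reflectionGL p • (Pi.single p (-1) : Fin n → ℤ) = Pi.single p 1 := by
      rw [reflectionGL_smul, Pi.single_eq_same, ← Pi.single_sub]
      norm_num
    rw [mul_smul, hv_eq, h1, hrefl, hσp]

lemma exists_smul_eq_single_of_odd_iff {p : Fin n} (hv : v ∈ columnOrbit κ)
    (hp : ∀ i, Odd (v i) ↔ i = p) :
    ∃ h ∈ oddElementary n ⊓ fixingCols n κ, h • v = Pi.single κ 1 := by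
  have hpκ : κ ≤ p := by
    obtain ⟨m, hm, hodd⟩ := exists_le_odd_of_mem_columnOrbit hv
    rwa [← (hp m).1 hodd]
  obtain ⟨h₁, hh₁, ⟨hv₁, -⟩, hzero⟩ := Subgroup.exists_smul_of_descent
    (oddElementary n ⊓ fixingCols n κ) (S := {w | w ∈ columnOrbit κ ∧ ∀ i, Odd (w i) ↔ i = p})
    (P := fun w => ∀ i, i ≠ p → w i = 0) (fun w => ∑ i, (w i).natAbs)
    (fun w hw hne => exists_smul_sum_natAbs_lt hpκ hw.1 hw.2 hne) ⟨hv, hp⟩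
  obtain ⟨h₂, hh₂, hv₂⟩ := exists_smul_eq_single_of_eq_zero hpκ hv₁ hzero
  exact ⟨h₂ * h₁, mul_mem hh₂ hh₁, by rw [mul_smul, hv₂]⟩

theorem exists_smul_eq_single_one (hv : v ∈ columnOrbit κ) :
    ∃ h ∈ oddElementary n ⊓ fixingCols n κ, h • v = Pi.single κ 1 := by
  obtain ⟨h₁, hh₁, hv₁, p, hp⟩ := exists_smul_odd_iff_eq hv
  obtain ⟨h₂, hh₂, hv₂⟩ := exists_smul_eq_single_of_odd_iff hv₁ hp
  exact ⟨h₂ * h₁, mul_mem hh₂ hh₁, by rw [mul_smul, hv₂]⟩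

end ColumnReduction

theorem GLOdd_inf_fixingCols_le_oddElementary {k : ℕ} (hk : k ≤ n) :
    GLOdd n ⊓ fixingCols n k ≤ oddElementary n := by
  induction hk using Nat.decreasingInduction with
  | self =>
    rw [fixingCols_self, inf_bot_eq]
    exact bot_le
  | of_succ k hk ih =>
    let κ : Fin n := ⟨k, hk⟩
    refine le_trans (Subgroup.le_of_forall_exists_smul_eq (x := (Pi.single κ 1 : Fin n → ℤ))
      (inf_le_inf_right _ oddElementary_le_GLOdd) ?_ fun g hg => ?_) inf_le_left
    · rintro g ⟨⟨hodd, hfix⟩, hstab⟩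
      exact ⟨ih ⟨hodd, fixingCols_inf_stabilizer_le κ ⟨hfix, hstab⟩⟩, hfix⟩
    · have hv : g • (Pi.single κ 1 : Fin n → ℤ) ∈ columnOrbit κ :=
        mem_columnOrbit.2 ⟨g, hg, rfl⟩
      exact exists_smul_eq_single_one hv

theorem GLOdd_le_oddElementary : GLOdd n ≤ oddElementary n := by
  simpa [fixingCols_zero] using GLOdd_inf_fixingCols_le_oddElementary (n := n) (Nat.zero_le n)

def permThetaMuNu (n : ℕ) (hn : 3 ≤ n) : Set (GL (Fin n) ℤ) :=
  let i₀ : Fin n := ⟨0, Nat.lt_of_lt_of_le (by decide) hn⟩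
  let i₁ : Fin n := ⟨1, Nat.lt_of_lt_of_le (by decide) hn⟩
  let i₂ : Fin n := ⟨2, Nat.lt_of_lt_of_le (by decide) hn⟩
  {g | (∃ σ : Equiv.Perm (Fin n),
      (g : Matrix (Fin n) (Fin n) ℤ) = of fun i j => if i = σ j then 1 else 0) ∨
    (g : Matrix (Fin n) (Fin n) ℤ) = diagonal (fun i => if i = i₀ then -1 else 1) ∨
    (g : Matrix (Fin n) (Fin n) ℤ) = 1 + single i₁ i₀ 2 ∨
    (g : Matrix (Fin n) (Fin n) ℤ) = 1 + single i₁ i₀ 1 + single i₂ i₀ 1}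

lemma permThetaMuNu_subset_oddElementary (hn : 3 ≤ n) :
    permThetaMuNu n hn ⊆ oddElementary n := by
  rintro g (⟨σ, hσ⟩ | hg | hg | hg)
  · rw [Units.ext (hσ.trans (coe_permGL σ).symm)]
    exact permGL_mem_oddElementary σ
  · rw [Units.ext (hg.trans (coe_reflectionGL _).symm)]
    exact reflectionGL_mem_oddElementary _
  · rw [Units.ext (hg.trans (coe_transvectionGL (by simp [Fin.ext_iff]) 2).symm)]
    exact transvectionGL_mem_oddElementary _ (.inl rfl)
  · rw [Units.ext (hg.trans (coe_transvectionGL_mul_transvectionGL (by simp [Fin.ext_iff])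
      (by simp [Fin.ext_iff]) 1 1).symm)]
    exact transvectionGL_mul_transvectionGL_mem_oddElementary _ _ (by simp [Fin.ext_iff])

lemma oddElementary_le_closure_permThetaMuNu (hn : 3 ≤ n) :
    oddElementary n ≤ Subgroup.closure (permThetaMuNu n hn) := by
  set H := Subgroup.closure (permThetaMuNu n hn)
  set i₀ : Fin n := ⟨0, Nat.lt_of_lt_of_le (by decide) hn⟩
  set i₁ : Fin n := ⟨1, Nat.lt_of_lt_of_le (by decide) hn⟩
  set i₂ : Fin n := ⟨2, Nat.lt_of_lt_of_le (by decide) hn⟩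
  have h₁₀ : i₁ ≠ i₀ := by simp [i₀, i₁, Fin.ext_iff]
  have h₂₀ : i₂ ≠ i₀ := by simp [i₀, i₂, Fin.ext_iff]
  have h₁₂ : i₁ ≠ i₂ := by simp [i₁, i₂, Fin.ext_iff]
  have hperm (σ : Equiv.Perm (Fin n)) : permGL σ ∈ H :=
    Subgroup.subset_closure (Or.inl ⟨σ, coe_permGL σ⟩)
  have hconj (σ : Equiv.Perm (Fin n)) {g : GL (Fin n) ℤ} (hg : g ∈ H) :
      permGL σ * g * (permGL σ)⁻¹ ∈ H :=
    mul_mem (mul_mem (hperm σ) hg) (inv_mem (hperm σ))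
  refine (Subgroup.closure_le _).2 ?_
  rintro g (((⟨σ, rfl⟩ | ⟨p, rfl⟩) | ⟨a, b, hab, rfl⟩) | ⟨a, b, s, has, hbs, hab, rfl⟩)
  · exact hperm σ
  · rw [← Equiv.swap_apply_left i₀ p, ← permGL_conj_reflectionGL]
    exact hconj _ (Subgroup.subset_closure (Or.inr (Or.inl (coe_reflectionGL i₀))))
  · obtain ⟨σ, hσ⟩ := Equiv.Perm.exists_extending_pair ![i₁, i₀] ![a, b]
      (by intro i j; fin_cases i <;> fin_cases j <;> simp [h₁₀, h₁₀.symm])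
      (by intro i j; fin_cases i <;> fin_cases j <;> simp [hab, hab.symm])
    obtain ⟨rfl, rfl⟩ : σ i₁ = a ∧ σ i₀ = b := ⟨hσ 0, hσ 1⟩
    rw [← permGL_conj_transvectionGL σ h₁₀]
    exact hconj σ (Subgroup.subset_closure (Or.inr (Or.inr (Or.inl rfl))))
  · obtain ⟨σ, hσ⟩ := Equiv.Perm.exists_extending_pair ![i₁, i₂, i₀] ![a, b, s]
      (by intro i j; fin_cases i <;> fin_cases j <;> simp [h₁₀, h₂₀, h₁₂, h₁₀.symm, h₂₀.symm,
        h₁₂.symm])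
      (by intro i j; fin_cases i <;> fin_cases j <;> simp [has, hbs, hab, has.symm, hbs.symm,
        hab.symm])
    obtain ⟨rfl, rfl, rfl⟩ : σ i₁ = a ∧ σ i₂ = b ∧ σ i₀ = s := ⟨hσ 0, hσ 1, hσ 2⟩
    rw [← permGL_conj_transvectionGL σ h₁₀, ← permGL_conj_transvectionGL σ h₂₀,
      show ∀ x y : GL (Fin n) ℤ, permGL σ * x * (permGL σ)⁻¹ * (permGL σ * y * (permGL σ)⁻¹) =
        permGL σ * (x * y) * (permGL σ)⁻¹ from fun _ _ => by group]
    exact hconj σ (Subgroup.subset_closure (Or.inr (Or.inr (Or.inr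
      (coe_transvectionGL_mul_transvectionGL h₁₀ h₂₀ 1 1)))))

end Matrix

/-- For `n ≥ 3`, the group `GL(n,ℤ)_odd` (matrices of `GL(n,ℤ)` each of whose columns has an
odd sum of entries) is generated by the permutation matrices together with
`M_θ = diag(−1,1,…,1)`, `M_μ = I + 2E_{21}` and `M_ν = I + E_{21} + E_{31}`. -/
theorem GLodd_generators (n : ℕ) (hn : 3 ≤ n) :
    ((Subgroup.closure
        {g : Matrix.GeneralLinearGroup (Fin n) ℤ |
          (∃ σ : Equiv.Perm (Fin n),
            (g : Matrix (Fin n) (Fin n) ℤ) =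
              Matrix.of fun i j => if i = σ j then 1 else 0) ∨
          (g : Matrix (Fin n) (Fin n) ℤ) =
            Matrix.diagonal (fun i => if i = (⟨0, by omega⟩ : Fin n) then -1 else 1) ∨
          (g : Matrix (Fin n) (Fin n) ℤ) =
            1 + Matrix.single (⟨1, by omega⟩ : Fin n) (⟨0, by omega⟩ : Fin n) 2 ∨
          (g : Matrix (Fin n) (Fin n) ℤ) =
            1 + Matrix.single (⟨1, by omega⟩ : Fin n) (⟨0, by omega⟩ : Fin n) 1
              + Matrix.single (⟨2, by omega⟩ : Fin n) (⟨0, by omega⟩ : Fin n) 1}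
        : Subgroup (Matrix.GeneralLinearGroup (Fin n) ℤ)) :
      Set (Matrix.GeneralLinearGroup (Fin n) ℤ)) =
    {g : Matrix.GeneralLinearGroup (Fin n) ℤ |
      ∀ j : Fin n, Odd (∑ i : Fin n, (g : Matrix (Fin n) (Fin n) ℤ) i j)} := by
  have h : Subgroup.closure (Matrix.permThetaMuNu n hn) = Matrix.GLOdd n :=
    le_antisymm
      ((Subgroup.closure_le _).2 <|
        (Matrix.permThetaMuNu_subset_oddElementary hn).trans Matrix.oddElementary_le_GLOdd)
      (Matrix.GLOdd_le_oddElementary.trans (Matrix.oddElementary_le_closure_permThetaMuNu hn))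
  ext g
  exact (SetLike.ext_iff.1 h g).trans Matrix.mem_GLOdd_iff
end
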